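/- Consider the chain of F_3-vector spaces with basis {s^j} ∪ {s^j r^i : i > 0} ∪ {s^{j−i} t^i : 0 < i ≤ j} (a 'two-tailed' 3-complex), with D(s^j) = (j+ε)·s^j r + j·s^{j−1} t, D(s^j r^i) = (j+ε−i)·s^j r^{i+1}, D(s^{j−i} t^i) = (j−i)·s^{j−i−1} t^{i+1}, coefficients in F_3. Then D^3 = 0, both infinite/finite tails are eventually exact, and the non-free F_3[D]/(D^3)-summands are: for (ε, j mod 3) = (0,0): one 1-dim summand; (0,1): one 2-dim and one 1-dim; (0,2): one 2-dim; (1,0): one 2-dim; (1,1): one 1-dim; (1,2): none; (2,0): none; (2,1): one 2-dim; (2,2): one 1-dim. -/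

import Mathlib

/-- The "two-tailed" 3-complex: the `F₃`-vector space with basis `a₀` (for `sʲ`),
`bᵢ, i ≥ 1` (for `sʲrⁱ`; `b_{n+1} =` index `inr (inl n)`) and `cᵢ, 1 ≤ i ≤ j`
(for `s^{j−i}tⁱ`; `c_{i+1} =` index `inr (inr i)`), with
`D a₀ = (j+ε) b₁ + j c₁`, `D bᵢ = (j+ε−i) b_{i+1}`, `D cᵢ = (j−i) c_{i+1}`, `D c_j = 0`. -/
noncomputable def D19 (j : ℕ) (ε : ZMod 3) :
    ((Unit ⊕ ℕ ⊕ Fin j) →₀ ZMod 3) →ₗ[ZMod 3] ((Unit ⊕ ℕ ⊕ Fin j) →₀ ZMod 3) :=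
  Finsupp.lsum (ZMod 3) fun idx =>
    LinearMap.toSpanSingleton (ZMod 3) ((Unit ⊕ ℕ ⊕ Fin j) →₀ ZMod 3)
      (match idx with
        | Sum.inl _ =>
            ((j : ZMod 3) + ε) • Finsupp.single (Sum.inr (Sum.inl 0)) 1 +
              (j : ZMod 3) •
                (if h : 0 < j then Finsupp.single (Sum.inr (Sum.inr ⟨0, h⟩)) 1 else 0)
        | Sum.inr (Sum.inl n) =>
            ((j : ZMod 3) + ε - ((n + 1 : ℕ) : ZMod 3)) •
              Finsupp.single (Sum.inr (Sum.inl (n + 1))) 1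
        | Sum.inr (Sum.inr i) =>
            if h : (i : ℕ) + 1 < j then
              ((j : ZMod 3) - (((i : ℕ) + 1 : ℕ) : ZMod 3)) •
                Finsupp.single (Sum.inr (Sum.inr ⟨(i : ℕ) + 1, h⟩)) 1
            else 0)

/-- The number of 1-dimensional non-free summands of `(V, D)` (with `D³ = 0`):
`dim ker D / (ker D ∩ im D)`. -/
noncomputable def numJ1 (j : ℕ) (ε : ZMod 3) : ℕ :=
  Module.finrank (ZMod 3)
    (@HasQuotient.Quotient ↥(LinearMap.ker (D19 j ε))
      (Submodule (ZMod 3) ↥(LinearMap.ker (D19 j ε))) Submodule.hasQuotient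
      (Submodule.comap (LinearMap.ker (D19 j ε)).subtype
        (LinearMap.ker (D19 j ε) ⊓ LinearMap.range (D19 j ε))))

/-- The number of 2-dimensional non-free summands of `(V, D)` (with `D³ = 0`):
`dim (ker D ∩ im D) / im D²`. -/
noncomputable def numJ2 (j : ℕ) (ε : ZMod 3) : ℕ :=
  Module.finrank (ZMod 3)
    (@HasQuotient.Quotient ↥(LinearMap.ker (D19 j ε) ⊓ LinearMap.range (D19 j ε))
      (Submodule (ZMod 3) ↥(LinearMap.ker (D19 j ε) ⊓ LinearMap.range (D19 j ε)))
      Submodule.hasQuotient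
      (Submodule.comap (LinearMap.ker (D19 j ε) ⊓ LinearMap.range (D19 j ε)).subtype
        (LinearMap.range ((D19 j ε) ∘ₗ (D19 j ε)))))

/-!
Away from its first few basis vectors the complex is exact: every kernel vector vanishing at
`a₀, b₁, c₁` lies in `im D`, and every such vector also vanishing at `b₂, c₂` lies in `im D²`.
Preimages come from the partial inverse `D19PartialInv`; its only obstructions are the breaks,
where a kernel vector must vanish because the next coefficient is nonzero. Hence
`ker D / (ker D ∩ im D)` and `(ker D ∩ im D) / im D²` are read off from the images of these
subspaces under the low coordinates, which are explicit subsets of `F₃³` and `F₃⁴` depending only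
on `(j + ε, j)` in `F₃`; their cardinalities are then computed.
-/

section QuotientByMap

open Module

variable {K M W : Type*} [Field K] [AddCommGroup M] [Module K M] [AddCommGroup W] [Module K W]

lemma Submodule.finrank_quotient_add_finrank_map {N P : Submodule K M} (f : M →ₗ[K] W)
    (hNP : N ≤ P) (hf : P ⊓ LinearMap.ker f ≤ N) [FiniteDimensional K (P.map f)] :
    finrank K (P ⧸ N.comap P.subtype) + finrank K (N.map f) = finrank K (P.map f) := by
  set B := (N.map f).comap (P.map f).subtype
  let g : P →ₗ[K] P.map f ⧸ B := B.mkQ ∘ₗ f.submoduleMap P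
  have hg : Function.Surjective g := B.mkQ_surjective.comp (f.submoduleMap_surjective P)
  have hker : LinearMap.ker g = N.comap P.subtype := by
    ext ⟨x, hx⟩
    simp only [g, B, LinearMap.mem_ker, LinearMap.comp_apply, Submodule.mkQ_apply,
      Submodule.Quotient.mk_eq_zero, Submodule.mem_comap, Submodule.subtype_apply,
      LinearMap.submoduleMap_coe_apply, Submodule.mem_map]
    refine ⟨fun ⟨y, hy, hxy⟩ => ?_, fun hxN => ⟨x, hxN, rfl⟩⟩
    have hxy' : x - y ∈ N := hf ⟨P.sub_mem hx (hNP hy), by simp [hxy]⟩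
    simpa using N.add_mem hxy' hy
  rw [((Submodule.quotEquivOfEq _ _ hker.symm).trans (g.quotKerEquivOfSurjective hg)).finrank_eq,
    ← (Submodule.comapSubtypeEquivOfLe (Submodule.map_mono hNP)).finrank_eq,
    B.finrank_quotient_add_finrank]

lemma Submodule.finrank_quotient_eq_iff_card [Finite K] [Finite W] {N P : Submodule K M}
    (f : M →ₗ[K] W) (hNP : N ≤ P) (hf : P ⊓ LinearMap.ker f ≤ N) {s t : Finset W}
    (hs : ∀ v, v ∈ N.map f ↔ v ∈ s) (ht : ∀ v, v ∈ P.map f ↔ v ∈ t) (n : ℕ) :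
    finrank K (P ⧸ N.comap P.subtype) = n ↔ Nat.card K ^ n * s.card = t.card := by
  have natCard_eq {S : Submodule K W} {u : Finset W} (h : ∀ v, v ∈ S ↔ v ∈ u) :
      Nat.card S = u.card := by
    rw [← Nat.card_eq_finsetCard]
    exact Nat.card_congr (Equiv.subtypeEquivRight h)
  have key : Nat.card K ^ finrank K (P ⧸ N.comap P.subtype) * s.card = t.card := by
    rw [← natCard_eq hs, ← natCard_eq ht, natCard_eq_pow_finrank (K := K) (V := N.map f),
      natCard_eq_pow_finrank (K := K) (V := P.map f), ← pow_add,
      Submodule.finrank_quotient_add_finrank_map f hNP hf]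
  have hs_pos : 0 < s.card := Finset.card_pos.mpr ⟨0, (hs 0).mp (zero_mem _)⟩
  rw [← key, Nat.mul_left_inj hs_pos.ne', Nat.pow_right_inj Finite.one_lt_card, eq_comm]

end QuotientByMap

lemma zmod3_mul_self_mul {γ : ZMod 3} (hγ : γ ≠ 0) (r : ZMod 3) : γ * (γ * r) = r := by
  rw [← mul_assoc, (by revert γ; decide : ∀ γ : ZMod 3, γ ≠ 0 → γ * γ = 1) γ hγ, one_mul]

lemma sub_natCast_add {R : Type*} [AddCommGroupWithOne R] (γ : R) (n k : ℕ) :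
    γ - ((n + k : ℕ) : R) = γ - n - k := by
  rw [Nat.cast_add, sub_add_eq_sub_sub]

lemma add_three_le_of_natCast_sub_eq_zero {j k : ℕ} (hk : k < j)
    (h : (j : ZMod 3) - (k : ZMod 3) = 0) : k + 3 ≤ j := by
  have := (ZMod.natCast_eq_natCast_iff' j k 3).mp (sub_eq_zero.mp h)
  omega

open Finsupp

section Coordinates

variable {j : ℕ} {ε : ZMod 3}

lemma D19_apply_inl (x : (Unit ⊕ ℕ ⊕ Fin j) →₀ ZMod 3) : D19 j ε x (Sum.inl ()) = 0 := by
  induction x using Finsupp.induction_linear with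
  | zero => simp
  | add f g hf hg => simp [hf, hg]
  | single i r =>
    rcases i with _ | n | ⟨m, hm⟩ <;> simp [D19] <;> split_ifs <;> simp

lemma D19_apply_b_zero (x : (Unit ⊕ ℕ ⊕ Fin j) →₀ ZMod 3) :
    D19 j ε x (Sum.inr (Sum.inl 0)) = ((j : ZMod 3) + ε) * x (Sum.inl ()) := by
  induction x using Finsupp.induction_linear with
  | zero => simp
  | add f g hf hg => simp [hf, hg, mul_add]
  | single i r =>
    rcases i with _ | n | ⟨m, hm⟩ <;> simp [D19] <;> split_ifs <;> simp <;> ring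

lemma D19_apply_b_succ (x : (Unit ⊕ ℕ ⊕ Fin j) →₀ ZMod 3) (n : ℕ) :
    D19 j ε x (Sum.inr (Sum.inl (n + 1))) =
      ((j : ZMod 3) + ε - ((n + 1 : ℕ) : ZMod 3)) * x (Sum.inr (Sum.inl n)) := by
  induction x using Finsupp.induction_linear with
  | zero => simp
  | add f g hf hg => simp [hf, hg, mul_add]
  | single i r =>
    rcases i with _ | k | ⟨m, hm⟩ <;> simp [D19, Finsupp.single_apply] <;> split_ifs <;>
      simp_all [mul_comm]

lemma D19_apply_c_zero (hj : 0 < j) (x : (Unit ⊕ ℕ ⊕ Fin j) →₀ ZMod 3) :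
    D19 j ε x (Sum.inr (Sum.inr ⟨0, hj⟩)) = (j : ZMod 3) * x (Sum.inl ()) := by
  induction x using Finsupp.induction_linear with
  | zero => simp
  | add f g hf hg => simp [hf, hg, mul_add]
  | single i r =>
    rcases i with _ | n | ⟨m, hm⟩ <;> simp [D19, hj] <;> (try split_ifs) <;> simp_all [mul_comm]

lemma D19_apply_c_succ (x : (Unit ⊕ ℕ ⊕ Fin j) →₀ ZMod 3) (m : ℕ) (hm : m + 1 < j) :
    D19 j ε x (Sum.inr (Sum.inr ⟨m + 1, hm⟩)) =
      ((j : ZMod 3) - ((m + 1 : ℕ) : ZMod 3)) * x (Sum.inr (Sum.inr ⟨m, by omega⟩)) := by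
  induction x using Finsupp.induction_linear with
  | zero => simp
  | add f g hf hg => simp [hf, hg, mul_add]
  | single i r =>
    rcases i with _ | n | ⟨k, hk⟩ <;> simp [D19, Finsupp.single_apply] <;> split_ifs <;>
      simp_all [mul_comm, Fin.ext_iff]

lemma D19_single_inl (hj : 0 < j) (r : ZMod 3) :
    D19 j ε (single (Sum.inl ()) r) = single (Sum.inr (Sum.inl 0)) (((j : ZMod 3) + ε) * r) +
      single (Sum.inr (Sum.inr ⟨0, hj⟩)) ((j : ZMod 3) * r) := by
  simp only [D19, lsum_single, LinearMap.toSpanSingleton_apply, dif_pos hj, smul_add,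
    smul_single, smul_eq_mul, mul_one, mul_comm r]

lemma D19_single_b (n : ℕ) (r : ZMod 3) :
    D19 j ε (single (Sum.inr (Sum.inl n)) r) =
      single (Sum.inr (Sum.inl (n + 1))) (((j : ZMod 3) + ε - ((n + 1 : ℕ) : ZMod 3)) * r) := by
  simp only [D19, lsum_single, LinearMap.toSpanSingleton_apply, smul_single, smul_eq_mul,
    mul_one, mul_comm r]

lemma D19_single_c (m : ℕ) (hm : m + 1 < j) (r : ZMod 3) :
    D19 j ε (single (Sum.inr (Sum.inr ⟨m, by omega⟩)) r) =
      single (Sum.inr (Sum.inr ⟨m + 1, hm⟩)) (((j : ZMod 3) - ((m + 1 : ℕ) : ZMod 3)) * r) := by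
  simp only [D19, lsum_single, LinearMap.toSpanSingleton_apply, dif_pos hm, smul_single,
    smul_eq_mul, mul_one, mul_comm r]

lemma mul_apply_b_eq_zero_of_D19_eq_zero {x : (Unit ⊕ ℕ ⊕ Fin j) →₀ ZMod 3}
    (hx : D19 j ε x = 0) (n : ℕ) :
    ((j : ZMod 3) + ε - ((n + 1 : ℕ) : ZMod 3)) * x (Sum.inr (Sum.inl n)) = 0 := by
  rw [← D19_apply_b_succ, hx, coe_zero, Pi.zero_apply]

lemma mul_apply_c_eq_zero_of_D19_eq_zero {x : (Unit ⊕ ℕ ⊕ Fin j) →₀ ZMod 3}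
    (hx : D19 j ε x = 0) (m : ℕ) (hm : m + 1 < j) :
    ((j : ZMod 3) - ((m + 1 : ℕ) : ZMod 3)) * x (Sum.inr (Sum.inr ⟨m, by omega⟩)) = 0 := by
  rw [← D19_apply_c_succ _ _ hm, hx, coe_zero, Pi.zero_apply]

end Coordinates

section PartialInverse

variable {j : ℕ} {ε : ZMod 3}

/-- Since `γ * γ = 1` for `γ ≠ 0` in `F₃`, `D19 ∘ D19PartialInv` fixes every basis vector
`b_{n+2}`, `c_{m+2}` that `D19` reaches with a nonzero coefficient. -/
noncomputable def D19PartialInv (j : ℕ) (ε : ZMod 3) :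
    ((Unit ⊕ ℕ ⊕ Fin j) →₀ ZMod 3) →ₗ[ZMod 3] ((Unit ⊕ ℕ ⊕ Fin j) →₀ ZMod 3) :=
  Finsupp.lsum (ZMod 3) fun idx =>
    LinearMap.toSpanSingleton (ZMod 3) ((Unit ⊕ ℕ ⊕ Fin j) →₀ ZMod 3)
      (match idx with
        | Sum.inl _ | Sum.inr (Sum.inl 0) | Sum.inr (Sum.inr ⟨0, _⟩) => 0
        | Sum.inr (Sum.inl (n + 1)) =>
            ((j : ZMod 3) + ε - ((n + 1 : ℕ) : ZMod 3)) • single (Sum.inr (Sum.inl n)) 1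
        | Sum.inr (Sum.inr ⟨m + 1, h⟩) =>
            ((j : ZMod 3) - ((m + 1 : ℕ) : ZMod 3)) •
              single (Sum.inr (Sum.inr ⟨m, Nat.lt_of_succ_lt h⟩)) 1)

lemma D19PartialInv_apply_inl (x : (Unit ⊕ ℕ ⊕ Fin j) →₀ ZMod 3) :
    D19PartialInv j ε x (Sum.inl ()) = 0 := by
  induction x using Finsupp.induction_linear with
  | zero => simp
  | add f g hf hg => simp [hf, hg]
  | single i r =>
    rcases i with _ | (_ | n) | ⟨(_ | m), hm⟩ <;> simp [D19PartialInv]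

lemma D19PartialInv_apply_b (x : (Unit ⊕ ℕ ⊕ Fin j) →₀ ZMod 3) (n : ℕ) :
    D19PartialInv j ε x (Sum.inr (Sum.inl n)) =
      ((j : ZMod 3) + ε - ((n + 1 : ℕ) : ZMod 3)) * x (Sum.inr (Sum.inl (n + 1))) := by
  induction x using Finsupp.induction_linear with
  | zero => simp
  | add f g hf hg => simp [hf, hg, mul_add]
  | single i r =>
    rcases i with _ | (_ | k) | ⟨(_ | m), hm⟩ <;> simp [D19PartialInv, Finsupp.single_apply]
    split_ifs <;> simp_all [mul_comm]

lemma D19PartialInv_apply_c (x : (Unit ⊕ ℕ ⊕ Fin j) →₀ ZMod 3) (m : ℕ) (hm : m + 1 < j) :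
    D19PartialInv j ε x (Sum.inr (Sum.inr ⟨m, by omega⟩)) =
      ((j : ZMod 3) - ((m + 1 : ℕ) : ZMod 3)) * x (Sum.inr (Sum.inr ⟨m + 1, hm⟩)) := by
  induction x using Finsupp.induction_linear with
  | zero => simp
  | add f g hf hg => simp [hf, hg, mul_add]
  | single i r =>
    rcases i with _ | (_ | n) | ⟨(_ | k), hk⟩ <;> simp [D19PartialInv, Finsupp.single_apply]
    split_ifs <;> simp_all [mul_comm]

/-- The breaks are the basis vectors `b_{n+2}`, `c_{m+2}` that `D19` reaches with coefficient
`0`. -/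
def VanishesAtBreaks (j : ℕ) (ε : ZMod 3) (x : (Unit ⊕ ℕ ⊕ Fin j) →₀ ZMod 3) : Prop :=
  (∀ n : ℕ, (j : ZMod 3) + ε - ((n + 1 : ℕ) : ZMod 3) = 0 → x (Sum.inr (Sum.inl (n + 1))) = 0) ∧
  ∀ (m : ℕ) (hm : m + 1 < j), (j : ZMod 3) - ((m + 1 : ℕ) : ZMod 3) = 0 →
    x (Sum.inr (Sum.inr ⟨m + 1, hm⟩)) = 0

lemma D19_D19PartialInv {x : (Unit ⊕ ℕ ⊕ Fin j) →₀ ZMod 3} (hj : 0 < j)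
    (ha : x (Sum.inl ()) = 0) (hb : x (Sum.inr (Sum.inl 0)) = 0)
    (hc : x (Sum.inr (Sum.inr ⟨0, hj⟩)) = 0) (hbreaks : VanishesAtBreaks j ε x) :
    D19 j ε (D19PartialInv j ε x) = x := by
  ext k
  rcases k with _ | (_ | n) | ⟨(_ | m), hm⟩
  · rw [D19_apply_inl, ha]
  · rw [D19_apply_b_zero, D19PartialInv_apply_inl, mul_zero, hb]
  · rw [D19_apply_b_succ, D19PartialInv_apply_b]
    by_cases hγ : (j : ZMod 3) + ε - ((n + 1 : ℕ) : ZMod 3) = 0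
    · rw [hγ, hbreaks.1 n hγ, zero_mul]
    · exact zmod3_mul_self_mul hγ _
  · rw [D19_apply_c_zero hm, D19PartialInv_apply_inl, mul_zero, hc]
  · rw [D19_apply_c_succ, D19PartialInv_apply_c _ m hm]
    by_cases hγ : (j : ZMod 3) - ((m + 1 : ℕ) : ZMod 3) = 0
    · rw [hγ, hbreaks.2 m hm hγ, zero_mul]
    · exact zmod3_mul_self_mul hγ _

end PartialInverse

section Exactness

variable {j : ℕ} {ε : ZMod 3}

lemma vanishesAtBreaks_of_mem_ker {x : (Unit ⊕ ℕ ⊕ Fin j) →₀ ZMod 3} (hx : D19 j ε x = 0) :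
    VanishesAtBreaks j ε x := by
  constructor
  · intro n hγ
    have h := mul_apply_b_eq_zero_of_D19_eq_zero hx (n + 1)
    rw [sub_natCast_add _ (n + 1) 1, hγ] at h
    exact (mul_eq_zero.mp h).resolve_left (by decide)
  · intro m hm hγ
    -- `j ≡ m + 1 (mod 3)`, so the `c`-tail goes on for at least two more steps
    have hm' := add_three_le_of_natCast_sub_eq_zero hm hγ
    have h := mul_apply_c_eq_zero_of_D19_eq_zero hx (m + 1) (by omega)
    rw [sub_natCast_add _ (m + 1) 1, hγ] at h
    exact (mul_eq_zero.mp h).resolve_left (by decide)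

lemma vanishesAtBreaks_D19PartialInv_of_mem_ker {x : (Unit ⊕ ℕ ⊕ Fin j) →₀ ZMod 3}
    (hx : D19 j ε x = 0) : VanishesAtBreaks j ε (D19PartialInv j ε x) := by
  constructor
  · intro n hγ
    have h := mul_apply_b_eq_zero_of_D19_eq_zero hx (n + 1 + 1)
    rw [sub_natCast_add _ (n + 1) 2, hγ] at h
    rw [D19PartialInv_apply_b, (mul_eq_zero.mp h).resolve_left (by decide), mul_zero]
  · intro m hm hγ
    have hm' := add_three_le_of_natCast_sub_eq_zero hm hγ
    have h := mul_apply_c_eq_zero_of_D19_eq_zero hx (m + 1 + 1) (by omega)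
    rw [sub_natCast_add _ (m + 1) 2, hγ] at h
    rw [D19PartialInv_apply_c _ _ (by omega), (mul_eq_zero.mp h).resolve_left (by decide),
      mul_zero]

lemma D19_D19_D19 (hj : 3 ≤ j) (x : (Unit ⊕ ℕ ⊕ Fin j) →₀ ZMod 3) :
    D19 j ε (D19 j ε (D19 j ε x)) = 0 := by
  have consecutive : ∀ γ : ZMod 3, (γ - 2) * ((γ - 1) * γ) = 0 := by decide
  ext k
  rw [Finsupp.coe_zero, Pi.zero_apply]
  rcases k with _ | (_ | _ | _ | n) | ⟨(_ | _ | _ | m), hm⟩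
  · rw [D19_apply_inl]
  · rw [D19_apply_b_zero, D19_apply_inl, mul_zero]
  · rw [D19_apply_b_succ, D19_apply_b_zero, D19_apply_inl, mul_zero, mul_zero]
  · rw [D19_apply_b_succ, D19_apply_b_succ, D19_apply_b_zero]
    push_cast
    linear_combination consecutive ((j : ZMod 3) + ε) * x (Sum.inl ())
  · rw [D19_apply_b_succ, D19_apply_b_succ, D19_apply_b_succ]
    push_cast
    linear_combination consecutive ((j : ZMod 3) + ε - (n + 1)) * x (Sum.inr (Sum.inl n))
  · rw [D19_apply_c_zero, D19_apply_inl, mul_zero]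
  · rw [D19_apply_c_succ, D19_apply_c_zero (by omega), D19_apply_inl, mul_zero, mul_zero]
  · rw [D19_apply_c_succ, D19_apply_c_succ, D19_apply_c_zero (by omega)]
    push_cast
    linear_combination consecutive (j : ZMod 3) * x (Sum.inl ())
  · rw [D19_apply_c_succ, D19_apply_c_succ, D19_apply_c_succ]
    push_cast
    linear_combination
      consecutive ((j : ZMod 3) - (m + 1)) * x (Sum.inr (Sum.inr ⟨m, by omega⟩))

lemma mem_range_D19_of_mem_ker {x : (Unit ⊕ ℕ ⊕ Fin j) →₀ ZMod 3} (hj : 0 < j)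
    (hx : D19 j ε x = 0) (ha : x (Sum.inl ()) = 0) (hb : x (Sum.inr (Sum.inl 0)) = 0)
    (hc : x (Sum.inr (Sum.inr ⟨0, hj⟩)) = 0) :
    x ∈ LinearMap.range (D19 j ε) :=
  ⟨_, D19_D19PartialInv hj ha hb hc (vanishesAtBreaks_of_mem_ker hx)⟩

lemma mem_range_D19_comp_D19_of_mem_ker {x : (Unit ⊕ ℕ ⊕ Fin j) →₀ ZMod 3} (hj : 1 < j)
    (hx : D19 j ε x = 0) (ha : x (Sum.inl ()) = 0)
    (hb₀ : x (Sum.inr (Sum.inl 0)) = 0) (hc₀ : x (Sum.inr (Sum.inr ⟨0, by omega⟩)) = 0)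
    (hb₁ : x (Sum.inr (Sum.inl 1)) = 0) (hc₁ : x (Sum.inr (Sum.inr ⟨1, hj⟩)) = 0) :
    x ∈ LinearMap.range (D19 j ε ∘ₗ D19 j ε) := by
  refine ⟨D19PartialInv j ε (D19PartialInv j ε x), ?_⟩
  rw [LinearMap.comp_apply, D19_D19PartialInv (by omega) (D19PartialInv_apply_inl x),
    D19_D19PartialInv (by omega) ha hb₀ hc₀ (vanishesAtBreaks_of_mem_ker hx)]
  · rw [D19PartialInv_apply_b, hb₁, mul_zero]
  · rw [D19PartialInv_apply_c x 0 hj, hc₁, mul_zero]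
  · exact vanishesAtBreaks_D19PartialInv_of_mem_ker hx

end Exactness

section LowCoordinates

variable {j : ℕ} {ε : ZMod 3}

noncomputable def lowCoords₁ (hj : 0 < j) :
    ((Unit ⊕ ℕ ⊕ Fin j) →₀ ZMod 3) →ₗ[ZMod 3] ZMod 3 × ZMod 3 × ZMod 3 :=
  (lapply (Sum.inl ())).prod
    ((lapply (Sum.inr (Sum.inl 0))).prod (lapply (Sum.inr (Sum.inr ⟨0, hj⟩))))

noncomputable def lowCoords₂ (hj : 1 < j) :
    ((Unit ⊕ ℕ ⊕ Fin j) →₀ ZMod 3) →ₗ[ZMod 3] ZMod 3 × ZMod 3 × ZMod 3 × ZMod 3 :=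
  (lapply (Sum.inr (Sum.inl 0))).prod ((lapply (Sum.inr (Sum.inr ⟨0, by omega⟩))).prod
    ((lapply (Sum.inr (Sum.inl 1))).prod (lapply (Sum.inr (Sum.inr ⟨1, hj⟩)))))

def lowKer₁ (α β : ZMod 3) : Finset (ZMod 3 × ZMod 3 × ZMod 3) :=
  {v | α * v.1 = 0 ∧ β * v.1 = 0 ∧ (α - 1) * v.2.1 = 0 ∧ (β - 1) * v.2.2 = 0}

def lowKerRange₁ (α β : ZMod 3) : Finset (ZMod 3 × ZMod 3 × ZMod 3) :=
  ({t | α * (α - 1) * t = 0 ∧ β * (β - 1) * t = 0} : Finset (ZMod 3)).image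
    fun t => (0, α * t, β * t)

def lowKerRange₂ (α β : ZMod 3) : Finset (ZMod 3 × ZMod 3 × ZMod 3 × ZMod 3) :=
  ({w | α * (α - 1) * w.1 = 0 ∧ β * (β - 1) * w.1 = 0 ∧ (α - 1) * (α - 2) * w.2.1 = 0 ∧
      (β - 1) * (β - 2) * w.2.2 = 0} : Finset (ZMod 3 × ZMod 3 × ZMod 3)).image
    fun w => (α * w.1, β * w.1, (α - 1) * w.2.1, (β - 1) * w.2.2)

def lowRangeSq₂ (α β : ZMod 3) : Finset (ZMod 3 × ZMod 3 × ZMod 3 × ZMod 3) :=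
  Finset.univ.image fun t => (0, 0, α * (α - 1) * t, β * (β - 1) * t)

@[simp]
lemma lowCoords₁_apply (hj : 0 < j) (x : (Unit ⊕ ℕ ⊕ Fin j) →₀ ZMod 3) :
    lowCoords₁ hj x = (x (Sum.inl ()), x (Sum.inr (Sum.inl 0)), x (Sum.inr (Sum.inr ⟨0, hj⟩))) :=
  rfl

@[simp]
lemma lowCoords₂_apply (hj : 1 < j) (x : (Unit ⊕ ℕ ⊕ Fin j) →₀ ZMod 3) :
    lowCoords₂ hj x = (x (Sum.inr (Sum.inl 0)), x (Sum.inr (Sum.inr ⟨0, by omega⟩)),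
      x (Sum.inr (Sum.inl 1)), x (Sum.inr (Sum.inr ⟨1, hj⟩))) :=
  rfl

lemma mem_map_lowCoords₁_ker (hj : 1 < j) (v : ZMod 3 × ZMod 3 × ZMod 3) :
    v ∈ (LinearMap.ker (D19 j ε)).map (lowCoords₁ (by omega)) ↔
      v ∈ lowKer₁ ((j : ZMod 3) + ε) j := by
  obtain ⟨u, p, q⟩ := v
  simp only [Submodule.mem_map, LinearMap.mem_ker, lowCoords₁_apply, Prod.mk.injEq, lowKer₁,
    Finset.mem_filter, Finset.mem_univ, true_and]
  constructor
  · rintro ⟨x, hx, rfl, rfl, rfl⟩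
    refine ⟨?_, ?_, ?_, ?_⟩
    · rw [← D19_apply_b_zero, hx, coe_zero, Pi.zero_apply]
    · rw [← D19_apply_c_zero (by omega), hx, coe_zero, Pi.zero_apply]
    · simpa using mul_apply_b_eq_zero_of_D19_eq_zero hx 0
    · simpa using mul_apply_c_eq_zero_of_D19_eq_zero hx 0 hj
  · rintro ⟨hu₁, hu₂, hp, hq⟩
    refine ⟨single (Sum.inl ()) u + single (Sum.inr (Sum.inl 0)) p +
      single (Sum.inr (Sum.inr ⟨0, by omega⟩)) q, ?_, by simp⟩
    rw [map_add, map_add, D19_single_inl (by omega), D19_single_b, D19_single_c 0 hj]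
    simp [hu₁, hu₂, hp, hq]

lemma mem_map_lowCoords₁_ker_inf_range (hj : 1 < j) (v : ZMod 3 × ZMod 3 × ZMod 3) :
    v ∈ (LinearMap.ker (D19 j ε) ⊓ LinearMap.range (D19 j ε)).map (lowCoords₁ (by omega)) ↔
      v ∈ lowKerRange₁ ((j : ZMod 3) + ε) j := by
  simp only [Submodule.mem_map, Submodule.mem_inf, LinearMap.mem_ker, LinearMap.mem_range,
    lowKerRange₁, Finset.mem_image, Finset.mem_filter, Finset.mem_univ, true_and]
  constructor
  · rintro ⟨_, ⟨hx, y, rfl⟩, rfl⟩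
    have hb := mul_apply_b_eq_zero_of_D19_eq_zero hx 0
    have hc := mul_apply_c_eq_zero_of_D19_eq_zero hx 0 hj
    rw [D19_apply_b_zero] at hb
    rw [D19_apply_c_zero] at hc
    refine ⟨y (Sum.inl ()), ⟨?_, ?_⟩, ?_⟩
    · push_cast at hb; linear_combination hb
    · push_cast at hc; linear_combination hc
    · simp [D19_apply_inl, D19_apply_b_zero, D19_apply_c_zero]
  · rintro ⟨t, ⟨hα, hβ⟩, rfl⟩
    refine ⟨D19 j ε (single (Sum.inl ()) t), ⟨?_, _, rfl⟩, ?_⟩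
    · have hα' : ((j : ZMod 3) + ε - ((0 + 1 : ℕ) : ZMod 3)) * (((j : ZMod 3) + ε) * t) = 0 := by
        push_cast; linear_combination hα
      have hβ' : ((j : ZMod 3) - ((0 + 1 : ℕ) : ZMod 3)) * ((j : ZMod 3) * t) = 0 := by
        push_cast; linear_combination hβ
      rw [D19_single_inl (by omega), map_add, D19_single_b, D19_single_c 0 hj, hα', hβ',
        single_zero, single_zero, add_zero]
    · simp [D19_single_inl (by omega : 0 < j)]

lemma mem_map_lowCoords₂_ker_inf_range (hj : 3 ≤ j) (v : ZMod 3 × ZMod 3 × ZMod 3 × ZMod 3) :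
    v ∈ (LinearMap.ker (D19 j ε) ⊓ LinearMap.range (D19 j ε)).map (lowCoords₂ (by omega)) ↔
      v ∈ lowKerRange₂ ((j : ZMod 3) + ε) j := by
  simp only [Submodule.mem_map, Submodule.mem_inf, LinearMap.mem_ker, LinearMap.mem_range,
    lowKerRange₂, Finset.mem_image, Finset.mem_filter, Finset.mem_univ, true_and]
  constructor
  · rintro ⟨_, ⟨hx, y, rfl⟩, rfl⟩
    have hb₀ := mul_apply_b_eq_zero_of_D19_eq_zero hx 0
    have hc₀ := mul_apply_c_eq_zero_of_D19_eq_zero hx 0 (by omega)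
    have hb₁ := mul_apply_b_eq_zero_of_D19_eq_zero hx 1
    have hc₁ := mul_apply_c_eq_zero_of_D19_eq_zero hx 1 (by omega)
    rw [D19_apply_b_zero] at hb₀
    rw [D19_apply_c_zero] at hc₀
    rw [D19_apply_b_succ] at hb₁
    rw [D19_apply_c_succ] at hc₁
    push_cast at hb₀ hc₀ hb₁ hc₁
    refine ⟨(y (Sum.inl ()), y (Sum.inr (Sum.inl 0)), y (Sum.inr (Sum.inr ⟨0, by omega⟩))),
      ⟨?_, ?_, ?_, ?_⟩, ?_⟩
    · linear_combination hb₀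
    · linear_combination hc₀
    · linear_combination hb₁
    · linear_combination hc₁
    · simp [D19_apply_b_zero, D19_apply_c_zero, D19_apply_b_succ, D19_apply_c_succ]
  · rintro ⟨⟨s, p, q⟩, ⟨hs₁, hs₂, hp, hq⟩, rfl⟩
    refine ⟨D19 j ε (single (Sum.inl ()) s + single (Sum.inr (Sum.inl 0)) p +
      single (Sum.inr (Sum.inr ⟨0, by omega⟩)) q), ⟨?_, _, rfl⟩, ?_⟩
    · have h₁ : ((j : ZMod 3) + ε - ((0 + 1 : ℕ) : ZMod 3)) * (((j : ZMod 3) + ε) * s) = 0 := by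
        push_cast; linear_combination hs₁
      have h₂ : ((j : ZMod 3) - ((0 + 1 : ℕ) : ZMod 3)) * ((j : ZMod 3) * s) = 0 := by
        push_cast; linear_combination hs₂
      have h₃ : ((j : ZMod 3) + ε - ((1 + 1 : ℕ) : ZMod 3)) *
          (((j : ZMod 3) + ε - ((0 + 1 : ℕ) : ZMod 3)) * p) = 0 := by
        push_cast; linear_combination hp
      have h₄ : ((j : ZMod 3) - ((1 + 1 : ℕ) : ZMod 3)) *
          (((j : ZMod 3) - ((0 + 1 : ℕ) : ZMod 3)) * q) = 0 := by
        push_cast; linear_combination hq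
      simp only [map_add, D19_single_inl (by omega : 0 < j), D19_single_b,
        D19_single_c 0 (by omega : 0 + 1 < j), D19_single_c 1 (by omega : 1 + 1 < j)]
      rw [h₁, h₂, h₃, h₄]
      simp only [single_zero, add_zero]
    · simp [D19_apply_b_zero, D19_apply_c_zero, D19_apply_b_succ, D19_apply_c_succ]

lemma lowCoords₂_D19_D19 (hj : 1 < j) (y : (Unit ⊕ ℕ ⊕ Fin j) →₀ ZMod 3) :
    lowCoords₂ hj (D19 j ε (D19 j ε y)) = (0, 0, ((j : ZMod 3) + ε) * ((j : ZMod 3) + ε - 1) *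
      y (Sum.inl ()), (j : ZMod 3) * ((j : ZMod 3) - 1) * y (Sum.inl ())) := by
  rw [lowCoords₂_apply, D19_apply_b_zero, D19_apply_c_zero, D19_apply_inl,
    D19_apply_b_succ _ 0, D19_apply_c_succ _ 0 hj, D19_apply_b_zero, D19_apply_c_zero]
  push_cast
  ext <;> simp only <;> ring

lemma mem_map_lowCoords₂_range_sq (hj : 1 < j) (v : ZMod 3 × ZMod 3 × ZMod 3 × ZMod 3) :
    v ∈ (LinearMap.range (D19 j ε ∘ₗ D19 j ε)).map (lowCoords₂ hj) ↔
      v ∈ lowRangeSq₂ ((j : ZMod 3) + ε) j := by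
  simp only [Submodule.mem_map, LinearMap.mem_range, LinearMap.comp_apply, lowRangeSq₂,
    Finset.mem_image, Finset.mem_univ, true_and]
  constructor
  · rintro ⟨_, ⟨y, rfl⟩, rfl⟩
    exact ⟨y (Sum.inl ()), (lowCoords₂_D19_D19 hj y).symm⟩
  · rintro ⟨t, rfl⟩
    exact ⟨_, ⟨single (Sum.inl ()) t, rfl⟩, by rw [lowCoords₂_D19_D19, single_eq_same]⟩

lemma ker_inf_ker_lowCoords₁_le (hj : 0 < j) :
    LinearMap.ker (D19 j ε) ⊓ LinearMap.ker (lowCoords₁ hj) ≤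
      LinearMap.ker (D19 j ε) ⊓ LinearMap.range (D19 j ε) := by
  rintro x ⟨hx, hlow⟩
  simp only [SetLike.mem_coe, LinearMap.mem_ker, lowCoords₁_apply, Prod.mk_eq_zero] at hx hlow
  exact ⟨hx, mem_range_D19_of_mem_ker hj hx hlow.1 hlow.2.1 hlow.2.2⟩

lemma ker_inf_range_inf_ker_lowCoords₂_le (hj : 1 < j) :
    LinearMap.ker (D19 j ε) ⊓ LinearMap.range (D19 j ε) ⊓ LinearMap.ker (lowCoords₂ hj) ≤
      LinearMap.range (D19 j ε ∘ₗ D19 j ε) := by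
  rintro x ⟨⟨hx, y, rfl⟩, hlow⟩
  simp only [SetLike.mem_coe, LinearMap.mem_ker, lowCoords₂_apply, Prod.mk_eq_zero] at hx hlow
  exact mem_range_D19_comp_D19_of_mem_ker hj hx (D19_apply_inl y) hlow.1 hlow.2.1 hlow.2.2.1
    hlow.2.2.2

lemma range_D19_comp_D19_le (hj : 3 ≤ j) :
    LinearMap.range (D19 j ε ∘ₗ D19 j ε) ≤ LinearMap.ker (D19 j ε) ⊓ LinearMap.range (D19 j ε) := by
  rintro _ ⟨y, rfl⟩
  exact ⟨D19_D19_D19 hj y, _, rfl⟩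

end LowCoordinates

section Invariants

variable {j : ℕ} {ε : ZMod 3}

lemma numJ1_eq_iff (hj : 1 < j) (n : ℕ) :
    numJ1 j ε = n ↔ 3 ^ n * (lowKerRange₁ ((j : ZMod 3) + ε) j).card =
      (lowKer₁ ((j : ZMod 3) + ε) j).card := by
  have h := Submodule.finrank_quotient_eq_iff_card (lowCoords₁ (by omega : 0 < j)) inf_le_left
    (ker_inf_ker_lowCoords₁_le _) (mem_map_lowCoords₁_ker_inf_range (ε := ε) hj)
    (mem_map_lowCoords₁_ker hj) n
  rwa [Nat.card_zmod] at h

lemma numJ2_eq_iff (hj : 3 ≤ j) (n : ℕ) :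
    numJ2 j ε = n ↔ 3 ^ n * (lowRangeSq₂ ((j : ZMod 3) + ε) j).card =
      (lowKerRange₂ ((j : ZMod 3) + ε) j).card := by
  have h := Submodule.finrank_quotient_eq_iff_card (lowCoords₂ (by omega : 1 < j))
    (range_D19_comp_D19_le hj) (ker_inf_range_inf_ker_lowCoords₂_le _)
    (mem_map_lowCoords₂_range_sq (ε := ε) _) (mem_map_lowCoords₂_ker_inf_range hj) n
  rwa [Nat.card_zmod] at h

end Invariants

/-- For the two-tailed 3-complex: `D³ = 0`, and the non-free `F₃[D]/(D³)`-summands depend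
only on `(ε, j mod 3)` as tabulated: `(0,0)`: one 1-dim; `(0,1)`: one 2-dim and one 1-dim;
`(0,2)`: one 2-dim; `(1,0)`: one 2-dim; `(1,1)`: one 1-dim; `(1,2)`: none; `(2,0)`: none;
`(2,1)`: one 2-dim; `(2,2)`: one 1-dim. -/
theorem stmt19 (j : ℕ) (hj : 3 ≤ j) (ε : ZMod 3) :
    (∀ v, D19 j ε (D19 j ε (D19 j ε v)) = 0) ∧
    (ε = 0 → j % 3 = 0 → numJ1 j ε = 1 ∧ numJ2 j ε = 0) ∧
    (ε = 0 → j % 3 = 1 → numJ1 j ε = 1 ∧ numJ2 j ε = 1) ∧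
    (ε = 0 → j % 3 = 2 → numJ1 j ε = 0 ∧ numJ2 j ε = 1) ∧
    (ε = 1 → j % 3 = 0 → numJ1 j ε = 0 ∧ numJ2 j ε = 1) ∧
    (ε = 1 → j % 3 = 1 → numJ1 j ε = 1 ∧ numJ2 j ε = 0) ∧
    (ε = 1 → j % 3 = 2 → numJ1 j ε = 0 ∧ numJ2 j ε = 0) ∧
    (ε = 2 → j % 3 = 0 → numJ1 j ε = 0 ∧ numJ2 j ε = 0) ∧
    (ε = 2 → j % 3 = 1 → numJ1 j ε = 0 ∧ numJ2 j ε = 1) ∧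
    (ε = 2 → j % 3 = 2 → numJ1 j ε = 1 ∧ numJ2 j ε = 0) := by
  have hjmod : ∀ k : ℕ, j % 3 = k → (j : ZMod 3) = k := fun k hk => by
    rw [← hk, ZMod.natCast_mod]
  refine ⟨D19_D19_D19 hj, ?_, ?_, ?_, ?_, ?_, ?_, ?_, ?_, ?_⟩ <;> rintro rfl hk <;>
    rw [numJ1_eq_iff (by omega), numJ2_eq_iff hj, hjmod _ hk] <;> decide
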